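/- Let f be a union-intersection expression, let h be a random hash function such that for any two distinct input elements x ≠ y, Pr[h(x) = h(y)] ≤ 1/N, and define H = f(h(S_1),...,h(S_m)) and S'_i = {x ∈ S_i : h(x) ∈ H}. If x ∈ S_i but x ∉ f(S_1,...,S_m) and x ∈ S'_i, then there exists an input element y ≠ x with h(y) = h(x). Consequently the expected total number of pairs (i, x) with x ∈ S'_i \ f(S_1,...,S_m) is at most n·(n−1)/N, where n is the total size of the inputs counted with multiplicity over leaves. -/

import Mathlib

/-- A union-intersection expression tree on `m` input sets. -/
inductive Expr (m : ℕ) where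
  | leaf : Fin m → Expr m
  | union : Expr m → Expr m → Expr m
  | inter : Expr m → Expr m → Expr m

/-- Bottom-up evaluation of an expression on finite sets. -/
def Expr.evalF {m : ℕ} {U : Type*} [DecidableEq U] (S : Fin m → Finset U) :
    Expr m → Finset U
  | .leaf i => S i
  | .union a b => a.evalF S ∪ b.evalF S
  | .inter a b => a.evalF S ∩ b.evalF S

/-- `ψ(v)`: the maximum possible number of elements of the subexpression,
computed bottom-up: set size at leaves, sum at union nodes, min at
intersection nodes. -/
def Expr.psi {m : ℕ} {U : Type*} [DecidableEq U] (S : Fin m → Finset U) :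
    Expr m → ℕ
  | .leaf i => (S i).card
  | .union a b => a.psi S + b.psi S
  | .inter a b => min (a.psi S) (b.psi S)
/-- The multiset of leaf labels of an expression (with multiplicity). -/
def Expr.leaves {m : ℕ} : Expr m → Multiset (Fin m)
  | .leaf i => {i}
  | .union a b => a.leaves + b.leaves
  | .inter a b => a.leaves + b.leaves

open Finset

/-!
If `h` is injective on the input elements, evaluating `e` commutes with taking images under
`h`, so `x ∉ e(S)` forces `h x ∉ e(h(S))`; contrapositively, an element that survives the
filtering without belonging to `e(S)` collides with another input element. By the union bound
this happens with probability at most `(n - 1)/N` for each of the `n` leaf occurrences `(i, x)`,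
and linearity of expectation gives `n(n - 1)/N`.
-/

namespace Expr

variable {m : ℕ} {U : Type*} [DecidableEq U] {S : Fin m → Finset U}

def inputs (S : Fin m → Finset U) (e : Expr m) : Finset U :=
  e.leaves.toFinset.biUnion S

@[simp]
theorem mem_inputs {e : Expr m} {x : U} : x ∈ e.inputs S ↔ ∃ i ∈ e.leaves, x ∈ S i := by
  simp [inputs]

@[simp]
theorem inputs_leaf (i : Fin m) : (leaf i).inputs S = S i := by
  simp [inputs, leaves]

@[simp]
theorem inputs_union (a b : Expr m) : (union a b).inputs S = a.inputs S ∪ b.inputs S := by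
  simp [inputs, leaves, union_biUnion]

@[simp]
theorem inputs_inter (a b : Expr m) : (inter a b).inputs S = a.inputs S ∪ b.inputs S := by
  simp [inputs, leaves, union_biUnion]

theorem card_inputs_le (e : Expr m) : #(e.inputs S) ≤ (e.leaves.map fun i => #(S i)).sum := by
  induction e with
  | leaf i => simp [leaves]
  | union a b iha ihb | inter a b iha ihb =>
    simpa [leaves] using (card_union_le _ _).trans (add_le_add iha ihb)

theorem exists_collision_of_not_mem_evalF {V : Type*} [DecidableEq V] (g : U → V)
    {e : Expr m} {x : U} (hx : x ∉ e.evalF S) (hgx : g x ∈ e.evalF fun j => (S j).image g) :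
    ∃ y ∈ e.inputs S, y ≠ x ∧ g y = g x := by
  induction e with
  | leaf i =>
    obtain ⟨y, hy, hyx⟩ := mem_image.1 hgx
    exact ⟨y, by simpa using hy, fun h => hx (h ▸ hy), hyx⟩
  | union a b iha ihb =>
    simp only [evalF, mem_union, not_or] at hx hgx
    rcases hgx with hgx | hgx
    · obtain ⟨y, hy, hyx⟩ := iha hx.1 hgx
      exact ⟨y, by simp [hy], hyx⟩
    · obtain ⟨y, hy, hyx⟩ := ihb hx.2 hgx
      exact ⟨y, by simp [hy], hyx⟩
  | inter a b iha ihb =>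
    simp only [evalF, mem_inter, not_and_or] at hx hgx
    rcases hx with hx | hx
    · obtain ⟨y, hy, hyx⟩ := iha hx hgx.1
      exact ⟨y, by simp [hy], hyx⟩
    · obtain ⟨y, hy, hyx⟩ := ihb hx hgx.2
      exact ⟨y, by simp [hy], hyx⟩

end Expr

section Counting

variable {Ω U : Type*} [Fintype Ω]

theorem card_filter_div_le_of_imp_collision {V : Type*} [DecidableEq U] [DecidableEq V]
    (h : Ω → U → V) (P : Ω → Prop) [DecidablePred P] {W : Finset U} {x : U} {p : ℝ}
    (hx : x ∈ W) (hcol : ∀ y, y ≠ x → (#{ω | h ω y = h ω x} : ℝ) / Fintype.card Ω ≤ p)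
    (hP : ∀ ω, P ω → ∃ y ∈ W, y ≠ x ∧ h ω y = h ω x) :
    (#{ω | P ω} : ℝ) / Fintype.card Ω ≤ (#W - 1) * p := by
  classical
  have hsub : ({ω | P ω} : Finset Ω) ⊆
      (W.erase x).biUnion fun y => ({ω | h ω y = h ω x} : Finset Ω) := by
    intro ω hω
    obtain ⟨y, hy, hyx, hc⟩ := hP ω (mem_filter.1 hω).2
    exact mem_biUnion.2 ⟨y, mem_erase.2 ⟨hyx, hy⟩, by simpa using hc⟩
  calc (#{ω | P ω} : ℝ) / Fintype.card Ω
      ≤ (∑ y ∈ W.erase x, (#{ω | h ω y = h ω x} : ℝ)) / Fintype.card Ω := by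
        gcongr
        exact_mod_cast (card_le_card hsub).trans card_biUnion_le
    _ = ∑ y ∈ W.erase x, (#{ω | h ω y = h ω x} : ℝ) / Fintype.card Ω := sum_div _ _ _
    _ ≤ #(W.erase x) • p := sum_le_card_nsmul _ _ _ fun y hy => hcol y (ne_of_mem_erase hy)
    _ = (#W - 1) * p := by rw [nsmul_eq_mul, cast_card_erase_of_mem hx]

theorem sum_card_filter_div_le (A : Finset U) (P : Ω → U → Prop) [∀ ω x, Decidable (P ω x)]
    {c : ℝ} (hc : ∀ x ∈ A, (#{ω | P ω x} : ℝ) / Fintype.card Ω ≤ c) :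
    (∑ ω, (#{x ∈ A | P ω x} : ℝ)) / Fintype.card Ω ≤ #A * c := by
  have hswap : ∑ ω, #{x ∈ A | P ω x} = ∑ x ∈ A, #{ω | P ω x} :=
    sum_card_bipartiteAbove_eq_sum_card_bipartiteBelow P
  rw [← Nat.cast_sum, hswap, Nat.cast_sum, sum_div, ← nsmul_eq_mul]
  exact sum_le_card_nsmul _ _ _ hc

theorem sum_multiset_card_filter_div_le {ι : Type*} (L : Multiset ι) (A : ι → Finset U)
    (P : Ω → U → Prop) [∀ ω x, Decidable (P ω x)] {c : ℝ}
    (hc : ∀ i ∈ L, ∀ x ∈ A i, (#{ω | P ω x} : ℝ) / Fintype.card Ω ≤ c) :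
    (∑ ω, ((L.map fun i => #{x ∈ A i | P ω x}).sum : ℝ)) / Fintype.card Ω
      ≤ ((L.map fun i => #(A i)).sum : ℝ) * c := by
  simp only [Nat.cast_multiset_sum, Multiset.map_map, Function.comp_def]
  rw [Finset.sum_eq_multiset_sum, Multiset.sum_map_sum_map, ← Multiset.sum_map_div,
    ← Multiset.sum_map_mul_right]
  exact Multiset.sum_map_le_sum_map _ _ fun i hi =>
    sum_card_filter_div_le (A i) P (hc i hi)

end Counting

theorem filtered_survivors_bound_general {m : ℕ} {U V Ω : Type*} [DecidableEq U]
    [DecidableEq V] [Fintype Ω]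
    (e : Expr m) (S : Fin m → Finset U) (h : Ω → U → V) (N : ℕ)
    (hcol : ∀ x y : U, x ≠ y →
      (((univ : Finset Ω).filter fun ω => h ω x = h ω y).card : ℝ)
          / Fintype.card Ω ≤ 1 / (N : ℝ)) :
    (∀ (ω : Ω) (i : Fin m) (x : U), x ∈ S i → x ∉ e.evalF S →
        h ω x ∈ e.evalF (fun j => (S j).image (h ω)) →
        ∃ (j : Fin m) (y : U), y ∈ S j ∧ y ≠ x ∧ h ω y = h ω x) ∧
    (∀ n : ℕ, n = ((e.leaves.map fun i => (S i).card).sum) →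
      (∑ ω : Ω, ((e.leaves.map fun i =>
            ((S i).filter fun x =>
              h ω x ∈ e.evalF (fun j => (S j).image (h ω)) ∧
                x ∉ e.evalF S).card).sum : ℝ)) / Fintype.card Ω
        ≤ (n : ℝ) * ((n : ℝ) - 1) / (N : ℝ)) := by
  refine ⟨fun ω i x _ hx hhx => ?_, fun n hn => ?_⟩
  · obtain ⟨y, hy, hyx, hc⟩ := e.exists_collision_of_not_mem_evalF (h ω) hx hhx
    obtain ⟨j, -, hyj⟩ := Expr.mem_inputs.1 hy
    exact ⟨j, y, hyj, hyx, hc⟩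
  · have hcard : (#(e.inputs S) : ℝ) ≤ n := by
      rw [hn]
      exact_mod_cast e.card_inputs_le
    calc _ ≤ (n : ℝ) * ((n - 1) * (1 / N)) := by
          rw [hn]
          refine sum_multiset_card_filter_div_le _ _ _ fun i hi x hx => ?_
          calc _ ≤ (#(e.inputs S) - 1) * (1 / (N : ℝ)) :=
                card_filter_div_le_of_imp_collision h _ (Expr.mem_inputs.2 ⟨i, hi, hx⟩)
                  (fun y hy => hcol y x hy) fun ω hω =>
                    e.exists_collision_of_not_mem_evalF (h ω) hω.2 hω.1
            _ ≤ _ := by rw [← hn]; gcongr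
      _ = _ := by ring

/-- If `x ∈ Sᵢ` survives the filtering by `H = f(h(S₁),…,h(Sₘ))` although
`x` is not in the result, then some other input element collides with `x`
under `h`; consequently, if any two distinct elements collide with
probability at most `1/N`, the expected total number of pairs `(i, x)` with
`x ∈ S'ᵢ \ f(S₁,…,Sₘ)` is at most `n(n−1)/N`, where `n` is the total input
size counted with multiplicity over the leaves. -/
theorem filtered_survivors_bound {m : ℕ} {U V Ω : Type*} [DecidableEq U]
    [DecidableEq V] [Fintype Ω] [Nonempty Ω]
    (e : Expr m) (S : Fin m → Finset U) (h : Ω → U → V) (N : ℕ) (hN : 0 < N)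
    (hcol : ∀ x y : U, x ≠ y →
      (((univ : Finset Ω).filter fun ω => h ω x = h ω y).card : ℝ)
          / Fintype.card Ω ≤ 1 / (N : ℝ)) :
    (∀ (ω : Ω) (i : Fin m) (x : U), x ∈ S i → x ∉ e.evalF S →
        h ω x ∈ e.evalF (fun j => (S j).image (h ω)) →
        ∃ (j : Fin m) (y : U), y ∈ S j ∧ y ≠ x ∧ h ω y = h ω x) ∧
    (∀ n : ℕ, n = ((e.leaves.map fun i => (S i).card).sum) →
      (∑ ω : Ω, ((e.leaves.map fun i =>
            ((S i).filter fun x =>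
              h ω x ∈ e.evalF (fun j => (S j).image (h ω)) ∧
                x ∉ e.evalF S).card).sum : ℝ)) / Fintype.card Ω
        ≤ (n : ℝ) * ((n : ℝ) - 1) / (N : ℝ)) :=
  filtered_survivors_bound_general e S h N hcol
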